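/- arXiv:2308.10536 — 12 statements merged into one kernel-verified Lean document; each statement's English description precedes it below -/
import Mathlib

section
/- Let A, B be real n×n matrices such that for every row index i one has |a_ii| > Σ_j |b_ij| + Σ_{j≠i} |a_ij| (the sum of the absolute values of all entries of the i-th row of B plus the off-diagonal absolute row sum of A). Then for every vector b ∈ ℝ^n, the generalized absolute value equation A x − B |x| = b has exactly one solution x ∈ ℝ^n. -/
/-!
Solving the `i`-th equation for `x i` turns the GAVE into the fixed-point problem for the
Jacobi-type map `x ↦ (b + B|x| - (A - diag A) x) / diag A`. Since `x ↦ |x|` is 1-Lipschitz,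
in the sup norm the `i`-th coordinate of this map is Lipschitz with constant
`(Σ_j |b_ij| + Σ_{j≠i} |a_ij|) / |a_ii| < 1`, so the map is a contraction of the complete space
`ℝⁿ` and Banach's fixed point theorem gives existence and uniqueness.
-/

open Finset Function

section CoordinateContraction

variable {ι : Type*} [Fintype ι]

theorem exists_contractingWith_of_dist_apply_le {f : (ι → ℝ) → ι → ℝ} (c : ι → ℝ)
    (hc : ∀ i, c i < 1) (hf : ∀ x y i, dist (f x i) (f y i) ≤ c i * dist x y) :
    ∃ K, ContractingWith K f := by
  set K : NNReal := univ.sup fun i => (c i).toNNReal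
  have hcK : ∀ i, c i ≤ K := fun i =>
    (Real.le_coe_toNNReal (c i)).trans
      (NNReal.coe_le_coe.2 (le_sup (f := fun i => (c i).toNNReal) (mem_univ i)))
  refine ⟨K, (Finset.sup_lt_iff zero_lt_one).2 fun i _ => ?_, ?_⟩
  · exact Real.toNNReal_lt_one.2 (hc i)
  · refine LipschitzWith.of_dist_le_mul fun x y => (dist_pi_le_iff (by positivity)).2 fun i => ?_
    exact (hf x y i).trans (mul_le_mul_of_nonneg_right (hcK i) dist_nonneg)

theorem abs_sum_mul_le_sum_abs_mul_norm (s : Finset ι) (a u : ι → ℝ) :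
    |∑ j ∈ s, a j * u j| ≤ (∑ j ∈ s, |a j|) * ‖u‖ :=
  calc |∑ j ∈ s, a j * u j| ≤ ∑ j ∈ s, |a j| * |u j| := by
        simpa only [abs_mul] using abs_sum_le_sum_abs (fun j => a j * u j) s
    _ ≤ ∑ j ∈ s, |a j| * ‖u‖ := by
        gcongr with j
        simpa only [Real.norm_eq_abs] using norm_le_pi_norm u j
    _ = (∑ j ∈ s, |a j|) * ‖u‖ := (sum_mul _ _ _).symm

theorem norm_abs_sub_abs_le_dist (x y : ι → ℝ) : ‖fun j => |x j| - |y j|‖ ≤ dist x y :=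
  (pi_norm_le_iff_of_nonneg dist_nonneg).2 fun j =>
    (abs_abs_sub_abs_le_abs_sub _ _).trans (by simpa only [Real.dist_eq] using dist_le_pi_dist x y j)

end CoordinateContraction

section Jacobi

variable {ι : Type*} [Fintype ι] [DecidableEq ι]

noncomputable def gaveJacobiMap (A B : Matrix ι ι ℝ) (b x : ι → ℝ) : ι → ℝ := fun i =>
  (b i + (B.mulVec fun j => |x j|) i - ∑ j ∈ univ.erase i, A i j * x j) / A i i

theorem Matrix.mulVec_apply_eq_diag_add_sum_erase (A : Matrix ι ι ℝ) (x : ι → ℝ) (i : ι) :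
    A.mulVec x i = A i i * x i + ∑ j ∈ univ.erase i, A i j * x j :=
  (add_sum_erase _ (fun j => A i j * x j) (mem_univ i)).symm

theorem isFixedPt_gaveJacobiMap_iff {A : Matrix ι ι ℝ} (hA : ∀ i, A i i ≠ 0)
    (B : Matrix ι ι ℝ) (b x : ι → ℝ) :
    IsFixedPt (gaveJacobiMap A B b) x ↔ A.mulVec x - B.mulVec (fun i => |x i|) = b := by
  simp only [IsFixedPt, funext_iff, gaveJacobiMap, Pi.sub_apply, div_eq_iff (hA _),
    A.mulVec_apply_eq_diag_add_sum_erase]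
  refine forall_congr' fun i => ⟨fun hi => ?_, fun hi => ?_⟩ <;> linarith

theorem dist_gaveJacobiMap_apply_le (A B : Matrix ι ι ℝ) (b x y : ι → ℝ) (i : ι) :
    dist (gaveJacobiMap A B b x i) (gaveJacobiMap A B b y i) ≤
      ((∑ j, |B i j|) + ∑ j ∈ univ.erase i, |A i j|) / |A i i| * dist x y := by
  have hdiff : gaveJacobiMap A B b x i - gaveJacobiMap A B b y i =
      ((∑ j, B i j * (|x j| - |y j|)) - ∑ j ∈ univ.erase i, A i j * (x - y) j) / A i i := by
    simp only [gaveJacobiMap, Matrix.mulVec, dotProduct, Pi.sub_apply, mul_sub, sum_sub_distrib]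
    ring
  have hB := abs_sum_mul_le_sum_abs_mul_norm univ (B i) fun j => |x j| - |y j|
  have hA := abs_sum_mul_le_sum_abs_mul_norm (univ.erase i) (A i) (x - y)
  rw [← dist_eq_norm] at hA
  have hB' : (∑ j, |B i j|) * ‖fun j => |x j| - |y j|‖ ≤ (∑ j, |B i j|) * dist x y := by
    gcongr
    exact norm_abs_sub_abs_le_dist x y
  rw [Real.dist_eq, hdiff, abs_div, div_mul_eq_mul_div, add_mul]
  gcongr
  exact (abs_sub _ _).trans (add_le_add (hB.trans hB') hA)

end Jacobi

/-- If for every row `i`, `|A i i| > Σ_j |B i j| + Σ_{j≠i} |A i j|`,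
then for every `b` the GAVE `A x − B |x| = b` has exactly one solution. -/
theorem gave_unique_of_diag_dominance {n : ℕ} (A B : Matrix (Fin n) (Fin n) ℝ)
    (h : ∀ i : Fin n,
      (∑ j, |B i j|) + ∑ j ∈ Finset.univ.erase i, |A i j| < |A i i|) :
    ∀ b : Fin n → ℝ,
      ∃! x : Fin n → ℝ, A.mulVec x - B.mulVec (fun i => |x i|) = b := by
  intro b
  have hApos : ∀ i, 0 < |A i i| := fun i => (by positivity : (0 : ℝ) ≤ _).trans_lt (h i)
  obtain ⟨K, hT⟩ := exists_contractingWith_of_dist_apply_le _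
    (fun i => (div_lt_one (hApos i)).2 (h i)) (dist_gaveJacobiMap_apply_le A B b)
  have hfix := isFixedPt_gaveJacobiMap_iff (fun i => abs_pos.1 (hApos i)) B b
  exact ⟨_, (hfix _).1 hT.fixedPoint_isFixedPt, fun y hy => hT.fixedPoint_unique ((hfix y).2 hy)⟩
end

section
/- Let A be a real n×n strictly diagonally dominant matrix, i.e. |a_ii| > Σ_{j≠i} |a_ij| for every i. Then A is invertible, and for every real n×n matrix B, the operator norm of A⁻¹B induced by the ℓ∞ vector norm satisfies ‖A⁻¹B‖_∞ ≤ max_i ( Σ_j |b_ij| ) / ( |a_ii| − Σ_{j≠i} |a_ij| ). -/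
/-!
Let `X = A⁻¹ B` and pick a row `i` of `X` with maximal absolute row sum `s`. Reading off row `i`
of `A X = B` and isolating the diagonal term gives `|a_ii| s ≤ Σ_k |b_ik| + (Σ_{j≠i} |a_ij|) s`,
and strict diagonal dominance lets us divide by `|a_ii| - Σ_{j≠i} |a_ij| > 0`.
Invertibility of `A` is the Levy–Desplanques theorem, a consequence of Gershgorin's circle theorem.
-/

/-- The operator norm on real `n × n` matrices induced by the `ℓ∞` vector norm,
which equals the maximum absolute row sum. -/
noncomputable def linftyOpNorm {n : ℕ} (M : Matrix (Fin n) (Fin n) ℝ) : ℝ :=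
  ⨆ i : Fin n, ∑ j, |M i j|

open Finset Matrix

section

variable {ι : Type*} [Fintype ι] [DecidableEq ι]

section Ring

variable {K : Type*} [Ring K] [LinearOrder K] [IsStrictOrderedRing K]

theorem abs_diag_mul_le_abs_mul_apply_add (A X : Matrix ι ι K) (i k : ι) :
    |A i i| * |X i k| ≤ |(A * X) i k| + ∑ j ∈ univ.erase i, |A i j| * |X j k| := by
  have hdiag : A i i * X i k = (A * X) i k - ∑ j ∈ univ.erase i, A i j * X j k := by
    rw [mul_apply, ← add_sum_erase _ _ (mem_univ i), add_sub_cancel_right]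
  calc |A i i| * |X i k| = |(A * X) i k - ∑ j ∈ univ.erase i, A i j * X j k| := by
        rw [← abs_mul, hdiag]
    _ ≤ |(A * X) i k| + |∑ j ∈ univ.erase i, A i j * X j k| := abs_sub _ _
    _ ≤ |(A * X) i k| + ∑ j ∈ univ.erase i, |A i j| * |X j k| := by
        gcongr
        exact (abs_sum_le_sum_abs _ _).trans_eq (sum_congr rfl fun j _ ↦ abs_mul _ _)

theorem abs_diag_mul_rowSum_le (A X : Matrix ι ι K) (i : ι) {s : K}
    (hs : ∀ j, ∑ k, |X j k| ≤ s) :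
    |A i i| * ∑ k, |X i k| ≤ ∑ k, |(A * X) i k| + (∑ j ∈ univ.erase i, |A i j|) * s :=
  calc |A i i| * ∑ k, |X i k| = ∑ k, |A i i| * |X i k| := mul_sum _ _ _
    _ ≤ ∑ k, (|(A * X) i k| + ∑ j ∈ univ.erase i, |A i j| * |X j k|) :=
        sum_le_sum fun k _ ↦ abs_diag_mul_le_abs_mul_apply_add A X i k
    _ = ∑ k, |(A * X) i k| + ∑ j ∈ univ.erase i, |A i j| * ∑ k, |X j k| := by
        simp only [sum_add_distrib, mul_sum]
        rw [sum_comm]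
    _ ≤ ∑ k, |(A * X) i k| + ∑ j ∈ univ.erase i, |A i j| * s := by
        gcongr with j
        exact hs j
    _ = ∑ k, |(A * X) i k| + (∑ j ∈ univ.erase i, |A i j|) * s := by rw [sum_mul]

end Ring

theorem rowSum_le_div_of_forall_rowSum_le {K : Type*} [Field K] [LinearOrder K]
    [IsStrictOrderedRing K] (A X : Matrix ι ι K) (i : ι)
    (hA : ∑ j ∈ univ.erase i, |A i j| < |A i i|) (hmax : ∀ j, ∑ k, |X j k| ≤ ∑ k, |X i k|) :
    ∑ k, |X i k| ≤ (∑ k, |(A * X) i k|) / (|A i i| - ∑ j ∈ univ.erase i, |A i j|) := by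
  rw [le_div_iff₀ (sub_pos.mpr hA), mul_sub, mul_comm]
  linarith [abs_diag_mul_rowSum_le A X i hmax]

end

/-- If `A` is strictly diagonally dominant, then `A` is invertible and
for every `B`, `‖A⁻¹ B‖_∞ ≤ max_i (Σ_j |b_ij|) / (|a_ii| − Σ_{j≠i} |a_ij|)`. -/
theorem sdd_inv_mul_linfty_bound {n : ℕ} (A : Matrix (Fin n) (Fin n) ℝ)
    (hA : ∀ i : Fin n, ∑ j ∈ Finset.univ.erase i, |A i j| < |A i i|) :
    IsUnit A ∧
      ∀ B : Matrix (Fin n) (Fin n) ℝ,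
        linftyOpNorm (A⁻¹ * B) ≤
          ⨆ i : Fin n,
            (∑ j, |B i j|) / (|A i i| - ∑ j ∈ Finset.univ.erase i, |A i j|) := by
  have hdet : IsUnit A.det :=
    (det_ne_zero_of_sum_row_lt_diag (by simpa only [Real.norm_eq_abs] using hA)).isUnit
  refine ⟨(isUnit_iff_isUnit_det A).mpr hdet, fun B ↦ ?_⟩
  set bound : Fin n → ℝ :=
    fun i ↦ (∑ j, |B i j|) / (|A i i| - ∑ j ∈ univ.erase i, |A i j|)
  have hAX : A * (A⁻¹ * B) = B := mul_nonsing_inv_cancel_left A B hdet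
  have hbound_nonneg (i : Fin n) : 0 ≤ bound i :=
    div_nonneg (sum_nonneg fun _ _ ↦ abs_nonneg _) (sub_pos.mpr (hA i)).le
  refine Real.iSup_le (fun i ↦ ?_) (Real.iSup_nonneg hbound_nonneg)
  have : Nonempty (Fin n) := ⟨i⟩
  obtain ⟨i₀, hi₀⟩ := Finite.exists_max fun i ↦ ∑ k, |(A⁻¹ * B) i k|
  calc ∑ k, |(A⁻¹ * B) i k| ≤ ∑ k, |(A⁻¹ * B) i₀ k| := hi₀ i
    _ ≤ bound i₀ := by
        simpa only [bound, hAX] using rowSum_le_div_of_forall_rowSum_le A _ i₀ (hA i₀) hi₀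
    _ ≤ ⨆ i, bound i := le_ciSup (Finite.bddAbove_range bound) i₀
end

section
/- Let A, B be real n×n matrices with A invertible. If ‖A⁻¹B‖_∞ < 1, where ‖·‖_∞ is the operator norm induced by the ℓ∞ vector norm, then for every b ∈ ℝ^n the generalized absolute value equation A x − B |x| = b has exactly one solution x ∈ ℝ^n. -/
lemma linftyOpNorm_nonneg {n : ℕ} (M : Matrix (Fin n) (Fin n) ℝ) :
    0 ≤ linftyOpNorm M :=
  Real.iSup_nonneg fun _ => Finset.sum_nonneg fun _ _ => abs_nonneg _

lemma mulVec_norm_le {n : ℕ} (M : Matrix (Fin n) (Fin n) ℝ) (v : Fin n → ℝ) :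
    ‖M.mulVec v‖ ≤ linftyOpNorm M * ‖v‖ := by
  refine (pi_norm_le_iff_of_nonneg
    (mul_nonneg (linftyOpNorm_nonneg M) (norm_nonneg _))).2 fun i => ?_
  rw [Real.norm_eq_abs]
  calc |(M.mulVec v) i| ≤ ∑ j, |M i j * v j| := by
        simpa [Matrix.mulVec, dotProduct] using
          Finset.abs_sum_le_sum_abs (fun j => M i j * v j) Finset.univ
    _ = ∑ j, |M i j| * |v j| := by simp [abs_mul]
    _ ≤ ∑ j, |M i j| * ‖v‖ := Finset.sum_le_sum fun j _ =>
        mul_le_mul_of_nonneg_left (by simpa [Real.norm_eq_abs] using norm_le_pi_norm v j)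
          (abs_nonneg _)
    _ = (∑ j, |M i j|) * ‖v‖ := (Finset.sum_mul _ _ _).symm
    _ ≤ linftyOpNorm M * ‖v‖ := by
        refine mul_le_mul_of_nonneg_right ?_ (norm_nonneg _)
        exact le_ciSup (f := fun i => ∑ j, |M i j|)
          (Set.Finite.bddAbove (Set.finite_range _)) i

/-- If `A` is invertible and `‖A⁻¹ B‖_∞ < 1`, then for every `b`
the GAVE `A x − B |x| = b` has exactly one solution. -/
theorem gave_unique_of_linfty_lt_one {n : ℕ} (A B : Matrix (Fin n) (Fin n) ℝ)
    (hA : IsUnit A) (h : linftyOpNorm (A⁻¹ * B) < 1) :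
    ∀ b : Fin n → ℝ,
      ∃! x : Fin n → ℝ, A.mulVec x - B.mulVec (fun i => |x i|) = b := by
  intro b
  set M : Matrix (Fin n) (Fin n) ℝ := A⁻¹ * B with hM
  have hK0 : 0 ≤ linftyOpNorm M := linftyOpNorm_nonneg M
  set K : NNReal := ⟨linftyOpNorm M, hK0⟩ with hKdef
  have hAdet : IsUnit A.det := (Matrix.isUnit_iff_isUnit_det A).1 hA
  have hinv : A⁻¹ * A = 1 := Matrix.nonsing_inv_mul A hAdet
  have hinv' : A * A⁻¹ = 1 := Matrix.mul_nonsing_inv A hAdet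
  set c : Fin n → ℝ := A⁻¹.mulVec b with hc
  set T : (Fin n → ℝ) → (Fin n → ℝ) :=
    fun x => c + M.mulVec (fun i => |x i|) with hT
  have hlip : LipschitzWith K T := by
    refine LipschitzWith.of_dist_le_mul fun x y => ?_
    rw [dist_eq_norm, dist_eq_norm]
    have hsub : T x - T y = M.mulVec ((fun i => |x i|) - fun i => |y i|) := by
      rw [Matrix.mulVec_sub]
      simp [hT]
    rw [hsub]
    refine (mulVec_norm_le M _).trans ?_
    have hK : (K : ℝ) = linftyOpNorm M := rfl
    rw [hK]
    refine mul_le_mul_of_nonneg_left ?_ hK0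
    refine (pi_norm_le_iff_of_nonneg (norm_nonneg _)).2 fun i => ?_
    calc ‖((fun i => |x i|) - fun i => |y i|) i‖ = |(|x i| - |y i|)| := by
          simp [Real.norm_eq_abs]
      _ ≤ |x i - y i| := abs_abs_sub_abs_le_abs_sub _ _
      _ ≤ ‖x - y‖ := by simpa [Real.norm_eq_abs] using norm_le_pi_norm (x - y) i
  have hcontr : ContractingWith K T := ⟨by exact_mod_cast h, hlip⟩
  have hequiv : ∀ x : Fin n → ℝ,
      (A.mulVec x - B.mulVec (fun i => |x i|) = b) ↔ Function.IsFixedPt T x := by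
    intro x
    constructor
    · intro hx
      have h1 : A.mulVec x = b + B.mulVec (fun i => |x i|) := by
        rw [← hx]; ring_nf
      have h2 := congrArg A⁻¹.mulVec h1
      simp only [Matrix.mulVec_mulVec, Matrix.mulVec_add, hinv, Matrix.one_mulVec] at h2
      unfold Function.IsFixedPt
      rw [hT]
      simp only [hc, hM]
      rw [← h2]
    · intro hx
      have h1 : c + M.mulVec (fun i => |x i|) = x := hx
      have h2 := congrArg A.mulVec h1
      simp only [Matrix.mulVec_add, hc, hM, Matrix.mulVec_mulVec, ← Matrix.mul_assoc,
        hinv', Matrix.one_mul, Matrix.one_mulVec] at h2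
      rw [← h2]; ring_nf
  exact ⟨ContractingWith.fixedPoint T hcontr,
    (hequiv _).2 (ContractingWith.fixedPoint_isFixedPt hcontr),
    fun y hy => ContractingWith.fixedPoint_unique hcontr ((hequiv y).1 hy)⟩
end

section
/- Let A, B be real symmetric n×n matrices with B ≥ 0 entrywise and A positive definite. If xᵀ A x − |x|ᵀ B |x| > 0 for every nonzero x ∈ ℝ^n, then for every b ∈ ℝ^n the generalized absolute value equation A x − B |x| = b has exactly one solution x ∈ ℝ^n. -/
open Matrix

open scoped RealInnerProductSpace

/-!
Write `F x = A x - B |x|` and `q z = zᵀ A z - |z|ᵀ B |z|`. Because `B ≥ 0` and `| |x| - |y| | ≤ |x - y|`,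
`(x - y)ᵀ (F x - F y) ≥ q (x - y)`, and `q`, being continuous, positive away from `0` and homogeneous of
degree two, satisfies `q z ≥ m ‖z‖²` for some `m > 0`. So `F` is strongly monotone for the Euclidean inner
product; it is also Lipschitz, and Zarantonello's argument makes it a bijection: a solution of `F x = b`
is the fixed point of the contraction `x ↦ x - α (F x - b)` for small `α > 0`.
-/

section StronglyMonotone

variable {E : Type*} [NormedAddCommGroup E] [InnerProductSpace ℝ E]

def IsStronglyMonotone (m : ℝ) (F : E → E) : Prop :=
  ∀ x y, m * ‖x - y‖ ^ 2 ≤ ⟪F x - F y, x - y⟫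

namespace IsStronglyMonotone

variable {m : ℝ} {F : E → E}

theorem injective (hF : IsStronglyMonotone m F) (hm : 0 < m) : Function.Injective F := by
  intro x y hxy
  have hle : m * ‖x - y‖ ^ 2 ≤ 0 := by simpa [hxy] using hF x y
  have hsq : ‖x - y‖ ^ 2 = 0 := le_antisymm (nonpos_of_mul_nonpos_right hle hm) (by positivity)
  simpa [sub_eq_zero] using hsq

theorem norm_sub_smul_sub_sq_le {K : NNReal} (hF : IsStronglyMonotone m F)
    (hK : LipschitzWith K F) {α : ℝ} (hα : 0 ≤ α) (hαK : α * K ^ 2 ≤ m) (x y : E) :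
    ‖(x - y) - α • (F x - F y)‖ ^ 2 ≤ (1 - α * m) * ‖x - y‖ ^ 2 := by
  have hmono := hF x y
  have hlip : ‖F x - F y‖ ^ 2 ≤ K ^ 2 * ‖x - y‖ ^ 2 := by
    rw [← mul_pow]
    gcongr
    exact hK.norm_sub_le x y
  rw [norm_sub_sq_real, inner_smul_right, norm_smul, mul_pow, Real.norm_of_nonneg hα,
    real_inner_comm]
  nlinarith [mul_le_mul_of_nonneg_left hlip (sq_nonneg α),
    mul_le_mul_of_nonneg_right hαK (sq_nonneg ‖x - y‖)]

theorem surjective [CompleteSpace E] {K : NNReal} (hF : IsStronglyMonotone m F) (hm : 0 < m)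
    (hK : LipschitzWith K F) : Function.Surjective F := by
  intro b
  set α := m / (K ^ 2 + m ^ 2)
  have hα : 0 < α := by positivity
  have hαK : α * K ^ 2 ≤ m := by
    rw [div_mul_eq_mul_div, div_le_iff₀ (by positivity)]
    nlinarith [sq_nonneg m]
  have hαm : α * m ≤ 1 := by
    rw [div_mul_eq_mul_div, div_le_one (by positivity)]
    nlinarith [sq_nonneg (K : ℝ)]
  set T : E → E := fun x => x - α • (F x - b)
  have hT : ContractingWith (Real.sqrt (1 - α * m)).toNNReal T := by
    refine ⟨Real.toNNReal_lt_one.2 ?_, LipschitzWith.of_dist_le' fun x y => ?_⟩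
    · rw [Real.sqrt_lt' one_pos]
      nlinarith
    · have hsub : T x - T y = (x - y) - α • (F x - F y) := by
        simp only [T, smul_sub]
        abel
      rw [dist_eq_norm, dist_eq_norm, hsub]
      refine (pow_le_pow_iff_left₀ (norm_nonneg _) (by positivity) two_ne_zero).1 ?_
      rw [mul_pow, Real.sq_sqrt (by linarith)]
      exact hF.norm_sub_smul_sub_sq_le hK hα.le hαK x y
  refine ⟨ContractingWith.fixedPoint T hT, ?_⟩
  have hfix : α • (F (ContractingWith.fixedPoint T hT) - b) = 0 := by
    simpa [T, Function.IsFixedPt] using hT.fixedPoint_isFixedPt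
  simpa [hα.ne', sub_eq_zero] using hfix

theorem bijective [CompleteSpace E] {K : NNReal} (hF : IsStronglyMonotone m F) (hm : 0 < m)
    (hK : LipschitzWith K F) : Function.Bijective F :=
  ⟨hF.injective hm, hF.surjective hm hK⟩

end IsStronglyMonotone

end StronglyMonotone

theorem exists_pos_mul_sq_norm_le {E : Type*} [NormedAddCommGroup E] [NormedSpace ℝ E]
    [ProperSpace E] {q : E → ℝ} (hq : Continuous q) (hsmul : ∀ (c : ℝ) x, q (c • x) = c ^ 2 * q x)
    (hpos : ∀ x ≠ 0, 0 < q x) : ∃ m > 0, ∀ x, m * ‖x‖ ^ 2 ≤ q x := by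
  obtain ⟨m, hm, hmq⟩ := (isCompact_sphere (0 : E) 1).exists_forall_le' hq.continuousOn
    fun u hu => hpos u (ne_zero_of_mem_unit_sphere ⟨u, hu⟩)
  refine ⟨m, hm, fun x => ?_⟩
  rcases eq_or_ne x 0 with rfl | hx
  · simp [show q 0 = 0 by simpa using hsmul 0 0]
  · have hx' : ‖x‖ ≠ 0 := norm_ne_zero_iff.2 hx
    have hu : ‖x‖⁻¹ • x ∈ Metric.sphere (0 : E) 1 := by
      simp [norm_smul, inv_mul_cancel₀ hx']
    calc m * ‖x‖ ^ 2 ≤ q (‖x‖⁻¹ • x) * ‖x‖ ^ 2 := by gcongr; exact hmq _ hu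
      _ = q x := by rw [hsmul, inv_pow, mul_comm, ← mul_assoc, mul_inv_cancel₀ (pow_ne_zero 2 hx'),
        one_mul]

theorem Matrix.dotProduct_mulVec_le_of_abs_le {ι : Type*} [Fintype ι] {B : Matrix ι ι ℝ}
    (hB : ∀ i j, 0 ≤ B i j) (u : ι → ℝ) {v w : ι → ℝ} (hvw : |v| ≤ w) :
    u ⬝ᵥ B *ᵥ v ≤ |u| ⬝ᵥ B *ᵥ w := by
  simp only [dotProduct, mulVec, Finset.mul_sum]
  refine Finset.sum_le_sum fun i _ => Finset.sum_le_sum fun j _ => ?_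
  calc u i * (B i j * v j) ≤ |u i * (B i j * v j)| := le_abs_self _
    _ = |u i| * (B i j * |v j|) := by rw [abs_mul, abs_mul, abs_of_nonneg (hB i j)]
    _ ≤ |u i| * (B i j * w j) := by have := hB i j; gcongr; exact hvw j

section GAVE

variable {ι : Type*} [Fintype ι]

def gaveMap (A B : Matrix ι ι ℝ) (x : ι → ℝ) : ι → ℝ := A *ᵥ x - B *ᵥ |x|

def gaveForm (A B : Matrix ι ι ℝ) (z : ι → ℝ) : ℝ := z ⬝ᵥ A *ᵥ z - |z| ⬝ᵥ B *ᵥ |z|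

variable {A B : Matrix ι ι ℝ}

theorem gaveForm_sub_le_dotProduct (hB : ∀ i j, 0 ≤ B i j) (x y : ι → ℝ) :
    gaveForm A B (x - y) ≤ (x - y) ⬝ᵥ (gaveMap A B x - gaveMap A B y) := by
  have hB' := dotProduct_mulVec_le_of_abs_le hB (x - y) (abs_abs_sub_abs_le x y)
  simp only [gaveForm, gaveMap, mulVec_sub, dotProduct_sub] at hB' ⊢
  linarith

theorem gaveForm_smul (c : ℝ) (z : ι → ℝ) : gaveForm A B (c • z) = c ^ 2 * gaveForm A B z := by
  have habs : |c • z| = |c| • |z| := funext fun i => abs_mul c (z i)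
  simp only [gaveForm, habs, mulVec_smul, dotProduct_smul, smul_dotProduct, smul_eq_mul]
  rw [← mul_assoc |c|, abs_mul_abs_self]
  ring

theorem continuous_gaveForm : Continuous (gaveForm A B) := by
  have : Continuous fun z : ι → ℝ => |z| := continuous_pi fun i => (continuous_apply i).abs
  unfold gaveForm
  fun_prop

theorem exists_lipschitzWith_gaveMap : ∃ K, LipschitzWith K (gaveMap A B) := by
  have hA := (LinearMap.toContinuousLinearMap (mulVecLin A)).lipschitz
  have hB := (LinearMap.toContinuousLinearMap (mulVecLin B)).lipschitz
  have habs : LipschitzWith 1 fun x : ι → ℝ => |x| := LipschitzWith.of_dist_le_mul fun x y => by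
    rw [NNReal.coe_one, one_mul]
    exact (dist_pi_le_iff dist_nonneg).2 fun i =>
      (abs_abs_sub_abs_le_abs_sub (x i) (y i)).trans (dist_le_pi_dist x y i)
  exact ⟨_, hA.sub (hB.comp habs)⟩

theorem gaveMap_bijective (hB : ∀ i j, 0 ≤ B i j) (h : ∀ z ≠ 0, 0 < gaveForm A B z) :
    Function.Bijective (gaveMap A B) := by
  obtain ⟨m, hm, hmq⟩ := exists_pos_mul_sq_norm_le (E := EuclideanSpace ℝ ι)
    (continuous_gaveForm.comp (PiLp.continuous_ofLp 2 _))
    (fun c z => gaveForm_smul c z.ofLp) fun z hz => h z.ofLp (by simpa using hz)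
  obtain ⟨K, hK⟩ := exists_lipschitzWith_gaveMap (A := A) (B := B)
  let G : EuclideanSpace ℝ ι → EuclideanSpace ℝ ι := fun x => WithLp.toLp 2 (gaveMap A B x.ofLp)
  have hG : IsStronglyMonotone m G := fun x y =>
    calc m * ‖x - y‖ ^ 2 ≤ gaveForm A B (x.ofLp - y.ofLp) := hmq (x - y)
      _ ≤ (x.ofLp - y.ofLp) ⬝ᵥ (gaveMap A B x.ofLp - gaveMap A B y.ofLp) :=
        gaveForm_sub_le_dotProduct hB _ _
      _ = ⟪G x - G y, x - y⟫ := by simp [G, EuclideanSpace.inner_eq_star_dotProduct]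
  have hGK : LipschitzWith _ G :=
    (PiLp.lipschitzWith_toLp 2 _).comp (hK.comp (PiLp.lipschitzWith_ofLp 2 _))
  let e := WithLp.equiv 2 (ι → ℝ)
  exact (e.comp_bijective (G ∘ e.symm)).2 ((e.symm.bijective_comp G).2 (hG.bijective hm hGK))

end GAVE

theorem gave_unique_of_posdef_quadratic_general {n : ℕ} (A B : Matrix (Fin n) (Fin n) ℝ)
    (hB : ∀ i j, 0 ≤ B i j)
    (h : ∀ x : Fin n → ℝ, x ≠ 0 →
      0 < x ⬝ᵥ A.mulVec x - (fun i => |x i|) ⬝ᵥ B.mulVec (fun i => |x i|)) :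
    ∀ b : Fin n → ℝ,
      ∃! x : Fin n → ℝ, A.mulVec x - B.mulVec (fun i => |x i|) = b :=
  (gaveMap_bijective hB h).existsUnique

/-- If `A`, `B` are symmetric, `B ≥ 0` entrywise, `A` is positive
definite, and `xᵀ A x − |x|ᵀ B |x| > 0` for every nonzero `x`, then for every
`b` the GAVE `A x − B |x| = b` has exactly one solution. -/
theorem gave_unique_of_posdef_quadratic {n : ℕ} (A B : Matrix (Fin n) (Fin n) ℝ)
    (hAsymm : A.IsSymm) (hBsymm : B.IsSymm)
    (hB : ∀ i j, 0 ≤ B i j) (hA : A.PosDef)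
    (h : ∀ x : Fin n → ℝ, x ≠ 0 →
      0 < x ⬝ᵥ A.mulVec x - (fun i => |x i|) ⬝ᵥ B.mulVec (fun i => |x i|)) :
    ∀ b : Fin n → ℝ,
      ∃! x : Fin n → ℝ, A.mulVec x - B.mulVec (fun i => |x i|) = b :=
  gave_unique_of_posdef_quadratic_general A B hB h
end

section
/- Let A, B be real n×n matrices such that for every row index i one has |a_ii| > Σ_j |b_ij| + Σ_{j≠i} |a_ij|. Then for every real n×n matrix F, the generalized absolute value matrix equation A X − B |X| = F has exactly one solution X among real n×n matrices, where |X| denotes the entrywise absolute value of X. -/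
/-!
Split `A = D + N` with `D` the diagonal of `A`. The equation then reads
`X = D⁻¹ (F + B |X| - N X)`, and since `|·|` is 1-Lipschitz, the right-hand side moves row `i`
of an entrywise perturbation of size `d` by at most `(∑ⱼ |bᵢⱼ| + ∑_{j ≠ i} |aᵢⱼ|) d / |aᵢᵢ|`.
Strict row dominance makes every such ratio, hence their maximum `K`, smaller than `1`, so this
Jacobi map is a contraction for the sup norm on entries and the Banach fixed-point theorem gives
exactly one solution.
-/

open Finset Function
open scoped NNReal

lemma abs_sum_mul_le_of_abs_le {α : Type*} {s : Finset α} {c w : α → ℝ} {d : ℝ}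
    (hw : ∀ j ∈ s, |w j| ≤ d) : |∑ j ∈ s, c j * w j| ≤ (∑ j ∈ s, |c j|) * d := by
  rw [sum_mul]
  refine (abs_sum_le_sum_abs _ _).trans (sum_le_sum fun j hj => ?_)
  rw [abs_mul]
  exact mul_le_mul_of_nonneg_left (hw j hj) (abs_nonneg _)

lemma exists_lt_one_forall_le_mul {ι : Type*} [Fintype ι] {a b : ι → ℝ} (ha : ∀ i, 0 ≤ a i)
    (hab : ∀ i, a i < b i) : ∃ K : ℝ≥0, K < 1 ∧ ∀ i, a i ≤ K * b i := by
  have hb : ∀ i, 0 < b i := fun i => (ha i).trans_lt (hab i)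
  refine ⟨univ.sup fun i => (a i / b i).toNNReal, ?_, fun i => ?_⟩
  · refine (Finset.sup_lt_iff zero_lt_one).2 fun i _ => ?_
    exact Real.toNNReal_lt_one.2 ((div_lt_one (hb i)).2 (hab i))
  · have hi : ((a i / b i).toNNReal : ℝ) ≤ univ.sup fun i => (a i / b i).toNNReal := by
      exact_mod_cast le_sup (f := fun i => (a i / b i).toNNReal) (mem_univ i)
    rw [Real.coe_toNNReal _ (div_nonneg (ha i) (hb i).le), div_le_iff₀ (hb i)] at hi
    exact hi

namespace Matrix

variable {ι κ : Type*} [Fintype ι] [DecidableEq ι]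

/-- Typed on `ι → κ → ℝ` rather than `Matrix ι κ ℝ` so that it carries the sup metric. -/
noncomputable def gavmeJacobi (A B : Matrix ι ι ℝ) (F : Matrix ι κ ℝ) (X : ι → κ → ℝ) :
    ι → κ → ℝ :=
  fun i k => (F i k + ∑ j, B i j * |X j k| - ∑ j ∈ univ.erase i, A i j * X j k) / A i i

variable {A B : Matrix ι ι ℝ} {F : Matrix ι κ ℝ}

theorem isFixedPt_gavmeJacobi_iff (hA : ∀ i, A i i ≠ 0) (X : Matrix ι κ ℝ) :
    IsFixedPt (gavmeJacobi A B F) X ↔ A * X - B * X.map (fun t => |t|) = F := by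
  have hAX : ∀ i k, (A * X) i k = A i i * X i k + ∑ j ∈ univ.erase i, A i j * X j k :=
    fun i k => (add_sum_erase univ (fun j => A i j * X j k) (mem_univ i)).symm
  rw [← Matrix.ext_iff]
  refine funext_iff.trans (forall_congr' fun i => funext_iff.trans (forall_congr' fun k => ?_))
  simp only [gavmeJacobi, div_eq_iff (hA i), sub_apply, hAX, mul_apply, map_apply]
  constructor <;> intro h <;> linarith

theorem lipschitzWith_gavmeJacobi [Fintype κ] {K : ℝ≥0}
    (hK : ∀ i, (∑ j, |B i j|) + ∑ j ∈ univ.erase i, |A i j| ≤ K * |A i i|) :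
    LipschitzWith K (gavmeJacobi A B F) := by
  refine LipschitzWith.of_dist_le_mul fun X Y => ?_
  set d := dist X Y
  have hd : 0 ≤ (K : ℝ) * d := mul_nonneg K.coe_nonneg dist_nonneg
  have hXY : ∀ j k, |X j k - Y j k| ≤ d := fun j k =>
    ((dist_le_pi_dist (X j) (Y j) k).trans (dist_le_pi_dist X Y j) : _)
  refine (dist_pi_le_iff hd).2 fun i => (dist_pi_le_iff hd).2 fun k => ?_
  have hdiff : gavmeJacobi A B F X i k - gavmeJacobi A B F Y i k =
      (∑ j, B i j * (|X j k| - |Y j k|) - ∑ j ∈ univ.erase i, A i j * (X j k - Y j k)) / A i i := by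
    simp only [gavmeJacobi, mul_sub, sum_sub_distrib]
    ring
  rw [Real.dist_eq, hdiff, abs_div]
  refine div_le_of_le_mul₀ (abs_nonneg _) hd ?_
  calc |∑ j, B i j * (|X j k| - |Y j k|) - ∑ j ∈ univ.erase i, A i j * (X j k - Y j k)|
      ≤ (∑ j, |B i j|) * d + (∑ j ∈ univ.erase i, |A i j|) * d := by
        refine (abs_sub _ _).trans (add_le_add ?_ ?_) <;> refine abs_sum_mul_le_of_abs_le ?_
        · exact fun j _ => (abs_abs_sub_abs_le_abs_sub _ _).trans (hXY j k)
        · exact fun j _ => hXY j k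
    _ ≤ K * |A i i| * d := by rw [← add_mul]; exact mul_le_mul_of_nonneg_right (hK i) dist_nonneg
    _ = K * d * |A i i| := by ring

end Matrix

open Matrix in
/-- If for every row `i`, `|A i i| > Σ_j |B i j| + Σ_{j≠i} |A i j|`,
then for every matrix `F` the GAVME `A X − B |X| = F` has exactly one solution
`X`, where `|X|` is the entrywise absolute value. -/
theorem gavme_unique_of_diag_dominance {n : ℕ} (A B : Matrix (Fin n) (Fin n) ℝ)
    (h : ∀ i : Fin n,
      (∑ j, |B i j|) + ∑ j ∈ Finset.univ.erase i, |A i j| < |A i i|) :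
    ∀ F : Matrix (Fin n) (Fin n) ℝ,
      ∃! X : Matrix (Fin n) (Fin n) ℝ, A * X - B * (X.map fun t => |t|) = F := by
  intro F
  have hrow : ∀ i, 0 ≤ (∑ j, |B i j|) + ∑ j ∈ univ.erase i, |A i j| := fun i => by positivity
  have hA : ∀ i, A i i ≠ 0 := fun i => abs_pos.1 ((hrow i).trans_lt (h i))
  obtain ⟨K, hK1, hK⟩ := exists_lt_one_forall_le_mul hrow h
  have hT : ContractingWith K (gavmeJacobi A B F) := ⟨hK1, lipschitzWith_gavmeJacobi hK⟩
  refine ⟨hT.fixedPoint, (isFixedPt_gavmeJacobi_iff hA _).1 hT.fixedPoint_isFixedPt,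
    fun Y hY => ?_⟩
  exact hT.fixedPoint_unique ((isFixedPt_gavmeJacobi_iff hA Y).2 hY)
end

section
/- Let A, B be real n×n matrices with B invertible, and let b ∈ ℝ^n be such that B⁻¹ b is entrywise nonnegative and B⁻¹ b ≠ 0. If σ_max(A) < σ_min(B), then the generalized absolute value equation A x − B |x| = b has no solution x ∈ ℝ^n. -/
/-- The Euclidean (`ℓ2`) norm of a vector in `ℝ^n`. -/
noncomputable def euclNorm {n : ℕ} (x : Fin n → ℝ) : ℝ :=
  Real.sqrt (∑ i, x i ^ 2)

/-- The largest singular value of a real square matrix: the operator norm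
induced by the Euclidean vector norm, i.e. the supremum of `‖M x‖₂` over unit
vectors `x`. -/
noncomputable def sigmaMax {n : ℕ} (M : Matrix (Fin n) (Fin n) ℝ) : ℝ :=
  sSup {r : ℝ | ∃ x : Fin n → ℝ, euclNorm x = 1 ∧ r = euclNorm (M.mulVec x)}

/-- The smallest singular value of a real square matrix: the infimum of
`‖M x‖₂` over unit vectors `x`. -/
noncomputable def sigmaMin {n : ℕ} (M : Matrix (Fin n) (Fin n) ℝ) : ℝ :=
  sInf {r : ℝ | ∃ x : Fin n → ℝ, euclNorm x = 1 ∧ r = euclNorm (M.mulVec x)}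

lemma euclNorm_eq {n : ℕ} (x : Fin n → ℝ) :
    euclNorm x = ‖(WithLp.equiv 2 (Fin n → ℝ)).symm x‖ := by
  rw [EuclideanSpace.norm_eq]
  simp [euclNorm, Real.norm_eq_abs, sq_abs]

lemma euclNorm_nonneg {n : ℕ} (x : Fin n → ℝ) : 0 ≤ euclNorm x :=
  Real.sqrt_nonneg _

lemma euclNorm_pos {n : ℕ} {x : Fin n → ℝ} (hx : x ≠ 0) : 0 < euclNorm x := by
  rw [euclNorm_eq]
  have : (WithLp.equiv 2 (Fin n → ℝ)).symm x ≠ 0 := by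
    simpa using hx
  exact norm_pos_iff.mpr this

lemma euclNorm_smul {n : ℕ} (r : ℝ) (x : Fin n → ℝ) :
    euclNorm (r • x) = |r| * euclNorm x := by
  rw [euclNorm_eq, euclNorm_eq]
  have : (WithLp.equiv 2 (Fin n → ℝ)).symm (r • x)
      = r • (WithLp.equiv 2 (Fin n → ℝ)).symm x := rfl
  rw [this, norm_smul, Real.norm_eq_abs]

lemma sigmaMax_bound {n : ℕ} (M : Matrix (Fin n) (Fin n) ℝ) (x : Fin n → ℝ) :
    euclNorm (M.mulVec x) ≤ sigmaMax M * euclNorm x := by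
  set f : EuclideanSpace ℝ (Fin n) →L[ℝ] EuclideanSpace ℝ (Fin n) :=
    LinearMap.toContinuousLinearMap (Matrix.toEuclideanLin M) with hf
  have hbdd : BddAbove {r : ℝ | ∃ x : Fin n → ℝ, euclNorm x = 1 ∧ r = euclNorm (M.mulVec x)} := by
    refine ⟨‖f‖, ?_⟩
    rintro r ⟨u, hu, rfl⟩
    have h1 : euclNorm (M.mulVec u) = ‖f ((WithLp.equiv 2 (Fin n → ℝ)).symm u)‖ := by
      rw [euclNorm_eq]; rfl
    have h2 : ‖f ((WithLp.equiv 2 (Fin n → ℝ)).symm u)‖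
        ≤ ‖f‖ * ‖(WithLp.equiv 2 (Fin n → ℝ)).symm u‖ := f.le_opNorm _
    rw [h1]
    calc ‖f ((WithLp.equiv 2 (Fin n → ℝ)).symm u)‖
        ≤ ‖f‖ * ‖(WithLp.equiv 2 (Fin n → ℝ)).symm u‖ := h2
      _ = ‖f‖ := by rw [← euclNorm_eq, hu, mul_one]
  by_cases hx : x = 0
  · subst hx
    simp [euclNorm, Matrix.mulVec_zero]
  · have ht : 0 < euclNorm x := euclNorm_pos hx
    set u : Fin n → ℝ := (euclNorm x)⁻¹ • x with hu
    have hun : euclNorm u = 1 := by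
      rw [hu, euclNorm_smul, abs_of_pos (inv_pos.mpr ht), inv_mul_cancel₀ ht.ne']
    have hmem : euclNorm (M.mulVec u) ∈
        {r : ℝ | ∃ x : Fin n → ℝ, euclNorm x = 1 ∧ r = euclNorm (M.mulVec x)} :=
      ⟨u, hun, rfl⟩
    have hle : euclNorm (M.mulVec u) ≤ sigmaMax M := le_csSup hbdd hmem
    have hmu : M.mulVec u = (euclNorm x)⁻¹ • M.mulVec x := by
      rw [hu, Matrix.mulVec_smul]
    rw [hmu, euclNorm_smul, abs_of_pos (inv_pos.mpr ht)] at hle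
    calc euclNorm (M.mulVec x)
        = ((euclNorm x)⁻¹ * euclNorm (M.mulVec x)) * euclNorm x := by
          field_simp
      _ ≤ sigmaMax M * euclNorm x := by
          exact mul_le_mul_of_nonneg_right hle ht.le

lemma sigmaMin_bound {n : ℕ} (M : Matrix (Fin n) (Fin n) ℝ) (x : Fin n → ℝ) (hx : x ≠ 0) :
    sigmaMin M * euclNorm x ≤ euclNorm (M.mulVec x) := by
  have hbdd : BddBelow {r : ℝ | ∃ x : Fin n → ℝ, euclNorm x = 1 ∧ r = euclNorm (M.mulVec x)} := by
    refine ⟨0, ?_⟩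
    rintro r ⟨u, hu, rfl⟩
    exact euclNorm_nonneg _
  have ht : 0 < euclNorm x := euclNorm_pos hx
  set u : Fin n → ℝ := (euclNorm x)⁻¹ • x with hu
  have hun : euclNorm u = 1 := by
    rw [hu, euclNorm_smul, abs_of_pos (inv_pos.mpr ht), inv_mul_cancel₀ ht.ne']
  have hmem : euclNorm (M.mulVec u) ∈
      {r : ℝ | ∃ x : Fin n → ℝ, euclNorm x = 1 ∧ r = euclNorm (M.mulVec x)} :=
    ⟨u, hun, rfl⟩
  have hle : sigmaMin M ≤ euclNorm (M.mulVec u) := csInf_le hbdd hmem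
  have hmu : M.mulVec u = (euclNorm x)⁻¹ • M.mulVec x := by
    rw [hu, Matrix.mulVec_smul]
  rw [hmu, euclNorm_smul, abs_of_pos (inv_pos.mpr ht)] at hle
  calc sigmaMin M * euclNorm x
      ≤ ((euclNorm x)⁻¹ * euclNorm (M.mulVec x)) * euclNorm x :=
        mul_le_mul_of_nonneg_right hle ht.le
    _ = euclNorm (M.mulVec x) := by field_simp

lemma euclNorm_mono {n : ℕ} {x y : Fin n → ℝ} (h : ∀ i, |x i| ≤ |y i|) :
    euclNorm x ≤ euclNorm y := by
  apply Real.sqrt_le_sqrt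
  apply Finset.sum_le_sum
  intro i _
  have := h i
  nlinarith [abs_nonneg (x i), abs_nonneg (y i), sq_abs (x i), sq_abs (y i)]

/-- If `B` is invertible, `B⁻¹ b ≥ 0` entrywise with `B⁻¹ b ≠ 0`,
and `σ_max(A) < σ_min(B)`, then the GAVE `A x − B |x| = b` has no solution. -/
theorem gave_no_solution_of_sigma {n : ℕ} (A B : Matrix (Fin n) (Fin n) ℝ)
    (hB : IsUnit B) (b : Fin n → ℝ)
    (hb : ∀ i, 0 ≤ B⁻¹.mulVec b i) (hb0 : B⁻¹.mulVec b ≠ 0)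
    (h : sigmaMax A < sigmaMin B) :
    ¬ ∃ x : Fin n → ℝ, A.mulVec x - B.mulVec (fun i => |x i|) = b := by
  rintro ⟨x, hx⟩
  set c : Fin n → ℝ := B⁻¹.mulVec b with hc
  have hBc : B.mulVec c = b := by
    rw [hc, Matrix.mulVec_mulVec, Matrix.mul_nonsing_inv B
      ((Matrix.isUnit_iff_isUnit_det B).mp hB), Matrix.one_mulVec]
  -- A x = B (|x| + c)
  have key : A.mulVec x = B.mulVec ((fun i => |x i|) + c) := by
    rw [Matrix.mulVec_add, hBc]
    have := hx
    linear_combination (norm := module) this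
  -- x = 0 case
  by_cases hx0 : x = 0
  · apply hb0
    rw [hc]
    subst hx0
    have habs0 : (fun i : Fin n => |(0 : Fin n → ℝ) i|) = 0 := by
      funext i; simp
    rw [habs0] at hx
    simp only [Matrix.mulVec_zero, sub_zero] at hx
    rw [← hx, Matrix.mulVec_zero]
  -- |x| + c ≠ 0
  have habs : (fun i => |x i|) + c ≠ 0 := by
    intro hz
    apply hx0
    funext i
    have hzi : |x i| + c i = 0 := congrFun hz i
    have h1 : 0 ≤ |x i| := abs_nonneg (x i)
    have h2 : 0 ≤ c i := hb i
    have : |x i| = 0 := by linarith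
    exact abs_eq_zero.mp this
  have h1 : euclNorm (A.mulVec x) ≤ sigmaMax A * euclNorm x := sigmaMax_bound A x
  have h2 : sigmaMin B * euclNorm ((fun i => |x i|) + c)
      ≤ euclNorm (B.mulVec ((fun i => |x i|) + c)) := sigmaMin_bound B _ habs
  have h3 : euclNorm x ≤ euclNorm ((fun i => |x i|) + c) := by
    apply euclNorm_mono
    intro i
    have h4 : 0 ≤ |x i| := abs_nonneg (x i)
    have h5 : 0 ≤ c i := hb i
    show |x i| ≤ |((fun i => |x i|) + c) i|
    have hiv : ((fun i => |x i|) + c) i = |x i| + c i := rfl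
    rw [hiv, abs_of_nonneg (by linarith : (0:ℝ) ≤ |x i| + c i)]
    linarith
  have hxp : 0 < euclNorm x := euclNorm_pos hx0
  have hsmaxnn : 0 ≤ sigmaMax A := by
    by_contra hcon
    push_neg at hcon
    nlinarith [euclNorm_nonneg (A.mulVec x)]
  have hsmin : 0 ≤ sigmaMin B := le_trans hsmaxnn h.le
  have chain : sigmaMin B * euclNorm x ≤ sigmaMax A * euclNorm x := by
    calc sigmaMin B * euclNorm x
        ≤ sigmaMin B * euclNorm ((fun i => |x i|) + c) :=
          mul_le_mul_of_nonneg_left h3 hsmin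
      _ ≤ euclNorm (B.mulVec ((fun i => |x i|) + c)) := h2
      _ = euclNorm (A.mulVec x) := by rw [key]
      _ ≤ sigmaMax A * euclNorm x := h1
  have : sigmaMin B ≤ sigmaMax A := le_of_mul_le_mul_right chain hxp
  linarith
end

section
/- Let A, B be real n×n matrices with B invertible, and let b ∈ ℝ^n be such that B⁻¹ b is entrywise nonnegative and B⁻¹ b ≠ 0. If σ_max(B⁻¹ A) < 1, then the generalized absolute value equation A x − B |x| = b has no solution x ∈ ℝ^n. -/
lemma euclNorm_sq {n : ℕ} (x : Fin n → ℝ) : euclNorm x ^ 2 = ∑ i, x i ^ 2 :=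
  Real.sq_sqrt (Finset.sum_nonneg fun i _ => sq_nonneg _)

lemma bddAbove_sigmaSet {n : ℕ} (M : Matrix (Fin n) (Fin n) ℝ) :
    BddAbove {r : ℝ | ∃ x : Fin n → ℝ, euclNorm x = 1 ∧ r = euclNorm (M.mulVec x)} := by
  refine ⟨Real.sqrt (∑ i, ∑ j, M i j ^ 2), ?_⟩
  rintro r ⟨x, hx, rfl⟩
  have h1 : euclNorm (M.mulVec x) ^ 2 ≤ ∑ i, ∑ j, M i j ^ 2 := by
    rw [euclNorm_sq]
    calc ∑ i, M.mulVec x i ^ 2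
        ≤ ∑ i, (∑ j, M i j ^ 2) * ∑ j, x j ^ 2 := by
          refine Finset.sum_le_sum fun i _ => ?_
          exact Finset.sum_mul_sq_le_sq_mul_sq Finset.univ (fun j => M i j) x
      _ = ∑ i, ∑ j, M i j ^ 2 := by
          have hx2 : ∑ j, x j ^ 2 = 1 := by
            have := euclNorm_sq x; rw [hx] at this; simpa using this.symm
          simp [hx2]
  calc euclNorm (M.mulVec x)
      = Real.sqrt (euclNorm (M.mulVec x) ^ 2) := (Real.sqrt_sq (euclNorm_nonneg _)).symm
    _ ≤ _ := Real.sqrt_le_sqrt h1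

/-- If `B` is invertible, `B⁻¹ b ≥ 0` entrywise with `B⁻¹ b ≠ 0`,
and `σ_max(B⁻¹ A) < 1`, then the GAVE `A x − B |x| = b` has no solution. -/
theorem gave_no_solution_of_sigmaMax_inv_mul {n : ℕ} (A B : Matrix (Fin n) (Fin n) ℝ)
    (hB : IsUnit B) (b : Fin n → ℝ)
    (hb : ∀ i, 0 ≤ B⁻¹.mulVec b i) (hb0 : B⁻¹.mulVec b ≠ 0)
    (h : sigmaMax (B⁻¹ * A) < 1) :
    ¬ ∃ x : Fin n → ℝ, A.mulVec x - B.mulVec (fun i => |x i|) = b := by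
  rintro ⟨x, hx⟩
  set M := B⁻¹ * A with hM
  set c := B⁻¹.mulVec b with hc
  have hdet : IsUnit B.det := (Matrix.isUnit_iff_isUnit_det B).mp hB
  have hBB : B⁻¹ * B = 1 := Matrix.nonsing_inv_mul B hdet
  have key : M.mulVec x = (fun i => |x i|) + c := by
    have h2 := congrArg (B⁻¹.mulVec) hx
    rw [Matrix.mulVec_sub, Matrix.mulVec_mulVec, Matrix.mulVec_mulVec, hBB,
      Matrix.one_mulVec] at h2
    have := sub_eq_iff_eq_add.mp h2
    rw [← hM, ← hc] at this
    rw [this]; ring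
  -- strict lower bound: ‖Mx‖² > ‖x‖²
  have hcpos : 0 < ∑ i, c i ^ 2 := by
    rcases Function.ne_iff.mp hb0 with ⟨i, hi⟩
    refine Finset.sum_pos' (fun j _ => sq_nonneg _) ⟨i, Finset.mem_univ i, ?_⟩
    exact pow_pos (lt_of_le_of_ne (hb i) (by simpa using (Ne.symm hi))) 2
  have hgt : euclNorm x ^ 2 < euclNorm (M.mulVec x) ^ 2 := by
    rw [euclNorm_sq, euclNorm_sq, key]
    have : ∀ i, x i ^ 2 + c i ^ 2 ≤ ((fun i => |x i|) + c) i ^ 2 := by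
      intro i
      have : ((fun i => |x i|) + c) i ^ 2 = x i ^ 2 + 2 * |x i| * c i + c i ^ 2 := by
        simp [Pi.add_apply, add_sq, sq_abs]
      rw [this]
      nlinarith [mul_nonneg (abs_nonneg (x i)) (hb i)]
    calc ∑ i, x i ^ 2 < ∑ i, (x i ^ 2 + c i ^ 2) := by
          rw [Finset.sum_add_distrib]; linarith
      _ ≤ _ := Finset.sum_le_sum fun i _ => this i
  have hgt' : euclNorm x < euclNorm (M.mulVec x) := by
    nlinarith [euclNorm_nonneg x, euclNorm_nonneg (M.mulVec x)]
  -- upper bound: ‖Mx‖ ≤ σ ‖x‖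
  have hub : euclNorm (M.mulVec x) ≤ sigmaMax M * euclNorm x := by
    rcases eq_or_ne x 0 with rfl | hx0
    · simp [Matrix.mulVec_zero, euclNorm]
    · have hxpos : 0 < euclNorm x := by
        rcases (euclNorm_nonneg x).lt_or_eq with h' | h'
        · exact h'
        · exfalso
          have : ∑ i, x i ^ 2 = 0 := by
            have := euclNorm_sq x; rw [← h'] at this; simpa using this.symm
          have : ∀ i ∈ Finset.univ, x i ^ 2 = 0 :=
            (Finset.sum_eq_zero_iff_of_nonneg fun i _ => sq_nonneg _).mp this
          exact hx0 (funext fun i => (pow_eq_zero_iff two_ne_zero).mp (this i (Finset.mem_univ i)))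
      set u := (euclNorm x)⁻¹ • x with hu
      have hu1 : euclNorm u = 1 := by
        rw [hu, euclNorm_smul, abs_of_pos (inv_pos.mpr hxpos), inv_mul_cancel₀ hxpos.ne']
      have hmem : euclNorm (M.mulVec u) ∈
          {r : ℝ | ∃ y : Fin n → ℝ, euclNorm y = 1 ∧ r = euclNorm (M.mulVec y)} :=
        ⟨u, hu1, rfl⟩
      have hle := le_csSup (bddAbove_sigmaSet M) hmem
      have heq : euclNorm (M.mulVec u) = (euclNorm x)⁻¹ * euclNorm (M.mulVec x) := by
        rw [hu, Matrix.mulVec_smul, euclNorm_smul, abs_of_pos (inv_pos.mpr hxpos)]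
      rw [heq] at hle
      calc euclNorm (M.mulVec x) = euclNorm x * ((euclNorm x)⁻¹ * euclNorm (M.mulVec x)) := by
            field_simp
        _ ≤ euclNorm x * sigmaMax M := by
            exact mul_le_mul_of_nonneg_left hle hxpos.le
        _ = sigmaMax M * euclNorm x := mul_comm _ _
  nlinarith [euclNorm_nonneg x, euclNorm_nonneg (M.mulVec x)]
end

section
/- Let A be a real symmetric n×n matrix. The absolute value equation A x − |x| = b has exactly one solution x ∈ ℝ^n for every b ∈ ℝ^n if and only if the symmetric matrices A − I and A + I have the same signature, i.e. the same number of positive eigenvalues, the same number of negative eigenvalues, and the same number of zero eigenvalues (counted with multiplicity). -/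
open Polynomial

/-- The signature of a real (symmetric) matrix: the numbers of positive,
negative and zero eigenvalues, counted with multiplicity (as roots of the
characteristic polynomial; for a symmetric real matrix the characteristic
polynomial splits over `ℝ` and its roots with multiplicity are exactly the
eigenvalues with multiplicity). -/
noncomputable def signature {n : ℕ} (M : Matrix (Fin n) (Fin n) ℝ) : ℕ × ℕ × ℕ :=
  ((M.charpoly.roots.filter fun μ => 0 < μ).card,
   (M.charpoly.roots.filter fun μ => μ < 0).card,
   (M.charpoly.roots.filter fun μ => μ = 0).card)

/-!
Both conditions say that every eigenvalue `λ` of `A` satisfies `1 < |λ|`. The eigenvalues of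
`A ∓ I` are the `λ ∓ 1`, so the two signatures agree exactly when no `λ` lies in `[-1, 1]`.
If `A v = λ v` with `v ≠ 0` and `|λ| ≤ 1`, then `x = v + λ|v|` and `y = λ|v| - v` are distinct
solutions of the same equation. If all `|λ| > 1`, then `c‖z‖ ≤ ‖A z‖` in the Euclidean norm for
some `c > 1`; as `x ↦ |x|` is `1`-Lipschitz, `x ↦ A⁻¹ (|x| + b)` is a contraction whose fixed
points are exactly the solutions.
-/

open Matrix Function NNReal

theorem Multiset.card_filter_eq_card_filter_iff {α : Type*} {s : Multiset α} {p q : α → Prop}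
    [DecidablePred p] [DecidablePred q] (h : ∀ x, p x → q x) :
    (s.filter p).card = (s.filter q).card ↔ ∀ x ∈ s, q x → p x := by
  refine ⟨fun hcard x hx hq => ?_, fun h' => ?_⟩
  · have heq := Multiset.eq_of_le_of_card_le (s.monotone_filter_right h) hcard.ge
    exact (Multiset.mem_filter.mp (heq ▸ Multiset.mem_filter.mpr ⟨hx, hq⟩)).2
  · rw [Multiset.filter_congr fun x hx => ⟨h x, h' x hx⟩]

theorem Matrix.roots_charpoly_sub_scalar {R n : Type*} [CommRing R] [IsDomain R] [Fintype n]
    [DecidableEq n] (M : Matrix n n R) (μ : R) :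
    (M - scalar n μ).charpoly.roots = M.charpoly.roots.map (· - μ) := by
  rw [charpoly_sub_scalar, ← one_mul X, ← C_1, roots_comp_C_mul_X_add_C _ _ _ isUnit_one]
  simp

theorem signature_sub_one_eq_signature_add_one_iff {n : ℕ} (M : Matrix (Fin n) (Fin n) ℝ) :
    signature (M - 1) = signature (M + 1) ↔ ∀ μ ∈ M.charpoly.roots, 1 < |μ| := by
  have hsub : M - 1 = M - scalar _ 1 := by simp
  have hadd : M + 1 = M - scalar _ (-1) := by rw [map_neg, map_one, sub_neg_eq_add]
  simp only [signature, hsub, hadd, roots_charpoly_sub_scalar, Multiset.filter_map,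
    Multiset.card_map, Prod.mk.injEq, Function.comp_def]
  refine ⟨fun ⟨hpos, hneg, _⟩ μ hμ => ?_, fun h => ?_⟩
  · rw [Multiset.card_filter_eq_card_filter_iff fun _ _ => by linarith] at hpos
    rw [eq_comm, Multiset.card_filter_eq_card_filter_iff fun _ _ => by linarith] at hneg
    rw [lt_abs]
    by_contra! hμ'
    rcases lt_or_ge (-1) μ with h1 | h1
    · linarith [hpos μ hμ (by linarith)]
    · linarith [hneg μ hμ (by linarith)]
  · refine ⟨?_, ?_, ?_⟩ <;> congr 1 <;> refine Multiset.filter_congr fun μ hμ => ?_ <;>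
      rcases lt_abs.mp (h μ hμ) with h' | h' <;> constructor <;> intro <;> linarith

theorem abs_add_abs_mul_sub_abs_sub_abs_mul {t l : ℝ} (hl : |l| ≤ 1) :
    |t + |t| * l| - |t - |t| * l| = 2 * l * t := by
  obtain ⟨hl₁, hl₂⟩ := abs_le.mp hl
  rcases le_total 0 t with ht | ht
  · rw [abs_of_nonneg ht, abs_of_nonneg (by nlinarith), abs_of_nonneg (by nlinarith)]
    ring
  · rw [abs_of_nonpos ht, abs_of_nonpos (by nlinarith), abs_of_nonpos (by nlinarith)]
    ring

theorem Matrix.not_injective_mulVec_sub_abs {n : Type*} [Fintype n] {A : Matrix n n ℝ}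
    {v : n → ℝ} {l : ℝ} (hv : A *ᵥ v = l • v) (hv0 : v ≠ 0) (hl : |l| ≤ 1) :
    ¬Injective fun x : n → ℝ => A *ᵥ x - fun i => |x i| := by
  intro hinj
  have hsame : A *ᵥ (v + l • |v|) - (fun i => |(v + l • |v|) i|) =
      A *ᵥ (l • |v| - v) - fun i => |(l • |v| - v) i| := by
    ext i
    have hvi : (A *ᵥ v) i = l * v i := by simp [hv]
    simp only [Pi.sub_apply, Pi.add_apply, Pi.smul_apply, Pi.abs_apply, smul_eq_mul, mulVec_add,
      mulVec_sub, mul_comm l]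
    rw [abs_sub_comm]
    linarith [abs_add_abs_mul_sub_abs_sub_abs_mul (t := v i) hl]
  apply hv0
  ext i
  have hi := congrFun (hinj hsame) i
  simp only [Pi.add_apply, Pi.sub_apply] at hi
  simp only [Pi.zero_apply]
  linarith

theorem bijective_sub_of_antilipschitzWith_of_lipschitzWith {E : Type*} [NormedAddCommGroup E]
    [CompleteSpace E] {T f : E → E} {k K : ℝ≥0} (hT : Surjective T) (hTk : AntilipschitzWith k T)
    (hf : LipschitzWith K f) (hkK : k * K < 1) : Bijective fun x => T x - f x := by
  refine bijective_iff_existsUnique _ |>.mpr fun b => ?_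
  set g := fun x => surjInv hT (f x + b)
  have hg : ContractingWith (k * K) g :=
    ⟨hkK, (hTk.to_rightInverse (rightInverse_surjInv hT)).comp
      (((isometry_add_right b).lipschitzWith_iff K).mpr hf)⟩
  have hsol : ∀ x, T x - f x = b ↔ IsFixedPt g x := fun x => by
    rw [sub_eq_iff_eq_add']
    refine ⟨fun h => ?_, fun h => ?_⟩
    · show surjInv hT (f x + b) = x
      rw [← h]
      exact leftInverse_surjInv ⟨hTk.injective, hT⟩ x
    · calc T x = T (g x) := by rw [h.eq]
        _ = f x + b := surjInv_eq hT _
  exact ⟨_, (hsol _).mpr hg.fixedPoint_isFixedPt, fun y hy => hg.fixedPoint_unique ((hsol y).mp hy)⟩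

theorem EuclideanSpace.lipschitzWith_one_abs {n : Type*} [Fintype n] :
    LipschitzWith 1 fun x : EuclideanSpace ℝ n => WithLp.toLp 2 fun i => |x i| := by
  refine LipschitzWith.of_dist_le_mul fun x y => ?_
  rw [EuclideanSpace.dist_eq, EuclideanSpace.dist_eq, NNReal.coe_one, one_mul]
  gcongr with i
  simpa only [Real.dist_eq] using abs_abs_sub_abs_le_abs_sub (x i) (y i)

namespace Matrix.IsHermitian

section RCLike

variable {𝕜 : Type*} [RCLike 𝕜] {n : Type*} [Fintype n] [DecidableEq n] {A : Matrix n n 𝕜}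

theorem eigenvectorBasis_repr_toEuclideanLin (hA : A.IsHermitian) (x : EuclideanSpace 𝕜 n)
    (i : n) :
    hA.eigenvectorBasis.repr (toEuclideanLin A x) i =
      hA.eigenvalues i * hA.eigenvectorBasis.repr x i := by
  simp only [eigenvectorBasis, eigenvalues, eigenvalues₀, OrthonormalBasis.repr_reindex]
  exact LinearMap.IsSymmetric.eigenvectorBasis_apply_self_apply _ _ _ _

theorem mul_norm_le_norm_toEuclideanLin (hA : A.IsHermitian) {c : ℝ}
    (hc : ∀ i, c ≤ |hA.eigenvalues i|) (x : EuclideanSpace 𝕜 n) :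
    c * ‖x‖ ≤ ‖toEuclideanLin A x‖ := by
  rcases le_or_gt c 0 with hc0 | hc0
  · exact (mul_nonpos_of_nonpos_of_nonneg hc0 (norm_nonneg x)).trans (norm_nonneg _)
  refine (sq_le_sq₀ (by positivity) (norm_nonneg _)).mp ?_
  rw [mul_pow, ← hA.eigenvectorBasis.repr.norm_map x,
    ← hA.eigenvectorBasis.repr.norm_map (toEuclideanLin A x), EuclideanSpace.norm_sq_eq,
    EuclideanSpace.norm_sq_eq, Finset.mul_sum]
  refine Finset.sum_le_sum fun i _ => ?_
  rw [eigenvectorBasis_repr_toEuclideanLin, norm_mul, mul_pow, RCLike.norm_ofReal]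
  gcongr
  exact hc i

end RCLike

theorem bijective_mulVec_sub_abs {n : Type*} [Fintype n] [DecidableEq n] {A : Matrix n n ℝ}
    (hA : A.IsHermitian) (h : ∀ i, 1 < |hA.eigenvalues i|) :
    Bijective fun x : n → ℝ => A *ᵥ x - fun i => |x i| := by
  obtain ⟨c, hc1, hc⟩ : ∃ c : ℝ≥0, 1 < c ∧ ∀ i, c ≤ |hA.eigenvalues i| := by
    cases isEmpty_or_nonempty n
    · exact ⟨2, one_lt_two, isEmptyElim⟩
    · obtain ⟨i, hi⟩ := Finite.exists_min fun i => |hA.eigenvalues i|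
      exact ⟨⟨_, abs_nonneg _⟩, h i, hi⟩
  have hc0 : (0 : ℝ) < c := zero_lt_one.trans hc1
  have hA_anti : AntilipschitzWith c⁻¹ (toEuclideanLin A) :=
    AddMonoidHomClass.antilipschitz_of_bound _ fun x => by
      rw [NNReal.coe_inv, le_inv_mul_iff₀ hc0]
      exact hA.mul_norm_le_norm_toEuclideanLin hc x
  have hE := bijective_sub_of_antilipschitzWith_of_lipschitzWith
    (LinearMap.injective_iff_surjective.mp hA_anti.injective) hA_anti
    EuclideanSpace.lipschitzWith_one_abs (by rw [mul_one]; exact inv_lt_one_of_one_lt₀ hc1)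
  convert (WithLp.equiv 2 _).bijective.comp (hE.comp (WithLp.equiv 2 _).symm.bijective)
  ext x
  simp

end Matrix.IsHermitian

/-- For a symmetric real matrix `A`, the AVE `A x − |x| = b` has a
unique solution for every `b` iff `A − I` and `A + I` have the same signature. -/
theorem ave_unique_iff_same_signature {n : ℕ} (A : Matrix (Fin n) (Fin n) ℝ)
    (hA : A.IsSymm) :
    (∀ b : Fin n → ℝ, ∃! x : Fin n → ℝ, A.mulVec x - (fun i => |x i|) = b) ↔
      signature (A - 1) = signature (A + 1) := by
  have hA' : A.IsHermitian := isHermitian_iff_isSymm.mpr hA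
  rw [signature_sub_one_eq_signature_add_one_iff, hA'.roots_charpoly_eq_eigenvalues]
  simp only [Multiset.forall_mem_map_iff, Finset.mem_univ_val, forall_const]
  refine ⟨fun h i => ?_,
    fun h => (bijective_iff_existsUnique _).mp (hA'.bijective_mulVec_sub_abs h)⟩
  by_contra! hi
  exact not_injective_mulVec_sub_abs (hA'.mulVec_eigenvectorBasis i)
    ((WithLp.ofLp_eq_zero 2).ne.2 (hA'.eigenvectorBasis.orthonormal.ne_zero i)) hi
    ((bijective_iff_existsUnique _).mpr h).injective
end

section
/- Let A be a real n×n matrix. If the interval matrix [A − I, A + I] is singular, i.e. there exists a real n×n matrix K with A − I ≤ K ≤ A + I entrywise that is not invertible, then the absolute value equation A x − |x| = b does not have a unique solution for every b: there exists b ∈ ℝ^n for which A x − |x| = b fails to have exactly one solution. -/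
private lemma key_abs (d v : ℝ) (h1 : -1 ≤ d) (h2 : d ≤ 1) :
    |(v + d * |v|) / 2| - |(d * |v| - v) / 2| = d * v := by
  rcases le_or_gt 0 v with hv | hv
  · rw [abs_of_nonneg hv,
      abs_of_nonneg (show (0:ℝ) ≤ (v + d * v) / 2 by nlinarith),
      abs_of_nonpos (show (d * v - v) / 2 ≤ 0 by nlinarith)]
    ring
  · rw [abs_of_neg hv,
      abs_of_nonpos (show (v + d * -v) / 2 ≤ 0 by nlinarith),
      abs_of_nonneg (show (0:ℝ) ≤ (d * -v - v) / 2 by nlinarith)]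
    ring

/-- If the interval matrix `[A − I, A + I]` is singular, i.e. some
matrix `K` with `A − I ≤ K ≤ A + I` entrywise is not invertible, then there is a
`b` for which the AVE `A x − |x| = b` fails to have exactly one solution. -/
theorem ave_not_unique_of_singular_interval {n : ℕ} (A : Matrix (Fin n) (Fin n) ℝ)
    (h : ∃ K : Matrix (Fin n) (Fin n) ℝ,
      (∀ i j, (A - 1) i j ≤ K i j ∧ K i j ≤ (A + 1) i j) ∧ ¬ IsUnit K) :
    ∃ b : Fin n → ℝ,
      ¬ ∃! x : Fin n → ℝ, A.mulVec x - (fun i => |x i|) = b := by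
  obtain ⟨K, hK, hKnu⟩ := h
  -- `K` has a nontrivial kernel vector `v`
  have hdet : K.det = 0 := by
    by_contra hd
    exact hKnu ((Matrix.isUnit_iff_isUnit_det K).mpr (isUnit_iff_ne_zero.mpr hd))
  obtain ⟨v, hv0, hKv⟩ := (Matrix.exists_mulVec_eq_zero_iff).mpr hdet
  -- the diagonal perturbation
  set d : Fin n → ℝ := fun i => A i i - K i i with hd_def
  have hd1 : ∀ i, -1 ≤ d i ∧ d i ≤ 1 := by
    intro i
    have h1 := (hK i i).1
    have h2 := (hK i i).2
    simp only [Matrix.sub_apply, Matrix.add_apply, Matrix.one_apply_eq] at h1 h2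
    constructor
    · simp only [hd_def]; linarith
    · simp only [hd_def]; linarith
  have hoff : ∀ i j, i ≠ j → A i j = K i j := by
    intro i j hij
    have h1 := (hK i j).1
    have h2 := (hK i j).2
    simp only [Matrix.sub_apply, Matrix.add_apply, Matrix.one_apply_ne hij] at h1 h2
    linarith
  -- hence `(A v)ᵢ = dᵢ vᵢ`
  have hAv : ∀ i, A.mulVec v i = d i * v i := by
    intro i
    have h0 : K.mulVec v i = 0 := congrFun hKv i
    have hsum : A.mulVec v i - K.mulVec v i = d i * v i := by
      simp only [Matrix.mulVec, dotProduct, ← Finset.sum_sub_distrib]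
      rw [Finset.sum_eq_single i]
      · simp only [hd_def]; ring
      · intro j _ hji
        rw [hoff i j (Ne.symm hji)]
        ring
      · intro hi
        exact absurd (Finset.mem_univ i) hi
    linarith
  -- two distinct solutions of the AVE with the same right-hand side
  set x : Fin n → ℝ := fun i => (v i + d i * |v i|) / 2 with hx_def
  set y : Fin n → ℝ := x - v with hy_def
  refine ⟨A.mulVec x - (fun i => |x i|), ?_⟩
  rintro ⟨z, _, huniq⟩
  have hsolx : A.mulVec x - (fun i => |x i|) = A.mulVec x - (fun i => |x i|) := rfl
  have hsoly : A.mulVec y - (fun i => |y i|) = A.mulVec x - (fun i => |x i|) := by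
    funext i
    have hmv : A.mulVec y i = A.mulVec x i - A.mulVec v i := by
      rw [hy_def, Matrix.mulVec_sub]
      rfl
    have habs : |x i| - |y i| = d i * v i := by
      have hyi : y i = (d i * |v i| - v i) / 2 := by
        simp only [hy_def, Pi.sub_apply, hx_def]
        ring
      rw [hyi, hx_def]
      exact key_abs (d i) (v i) (hd1 i).1 (hd1 i).2
    simp only [Pi.sub_apply, hmv, hAv i]
    linarith
  have hxz : x = z := (huniq x hsolx).symm.symm
  have hyz : y = z := huniq y hsoly
  have : v = 0 := by
    funext i
    have h' := congrFun (hxz.trans hyz.symm) i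
    simp only [hy_def, Pi.sub_apply] at h'
    simp only [Pi.zero_apply]
    linarith
  exact hv0 this
end

section
/- Let A be a real n×n matrix. If the inequality |A x| ≤ |x| (componentwise, where |·| is the componentwise absolute value) has a nontrivial solution x ≠ 0, then there exists b ∈ ℝ^n for which the absolute value equation A x − |x| = b fails to have exactly one solution. -/
/-- If `|A x| ≤ |x|` componentwise has a nontrivial solution
`x ≠ 0`, then there is a `b` for which the AVE `A x − |x| = b` fails to have
exactly one solution. -/
theorem ave_not_unique_of_nontrivial_contraction {n : ℕ}
    (A : Matrix (Fin n) (Fin n) ℝ)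
    (h : ∃ x : Fin n → ℝ, x ≠ 0 ∧ ∀ i, |A.mulVec x i| ≤ |x i|) :
    ∃ b : Fin n → ℝ,
      ¬ ∃! x : Fin n → ℝ, A.mulVec x - (fun i => |x i|) = b := by
  obtain ⟨x, hx, hle⟩ := h
  set c := A.mulVec x with hc
  set u : Fin n → ℝ := fun i => (x i + (if 0 ≤ x i then (1:ℝ) else -1) * c i) / 2 with hu
  set v : Fin n → ℝ := fun i => (-(x i) + (if 0 ≤ x i then (1:ℝ) else -1) * c i) / 2 with hv
  have huv : u - v = x := by
    funext i
    simp only [hu, hv, Pi.sub_apply]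
    ring
  have habs : ∀ i, |u i| - |v i| = c i := by
    intro i
    have h1 := hle i

    by_cases hxi : 0 ≤ x i
    · have hcle : |c i| ≤ x i := by rwa [abs_of_nonneg hxi] at h1
      have h2 : 0 ≤ u i := by
        simp only [hu, if_pos hxi, one_mul]
        nlinarith [neg_abs_le (c i)]
      have h3 : v i ≤ 0 := by
        simp only [hv, if_pos hxi, one_mul]
        nlinarith [le_abs_self (c i)]
      rw [abs_of_nonneg h2, abs_of_nonpos h3]
      simp only [hu, hv, if_pos hxi, one_mul]
      ring
    · have hxneg : x i < 0 := lt_of_not_ge hxi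
      have hcle : |c i| ≤ -x i := by rwa [abs_of_neg hxneg] at h1
      have h2 : u i ≤ 0 := by
        simp only [hu, if_neg hxi, neg_one_mul]
        nlinarith [neg_abs_le (c i)]
      have h3 : 0 ≤ v i := by
        simp only [hv, if_neg hxi, neg_one_mul]
        nlinarith [le_abs_self (c i)]
      rw [abs_of_nonpos h2, abs_of_nonneg h3]
      simp only [hu, hv, if_neg hxi, neg_one_mul]
      ring
  refine ⟨A.mulVec u - fun i => |u i|, fun hEU => ?_⟩
  obtain ⟨w, _, huniq⟩ := hEU
  have hequ : A.mulVec u - (fun i => |u i|) = A.mulVec u - fun i => |u i| := rfl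
  have heqv : A.mulVec v - (fun i => |v i|) = A.mulVec u - fun i => |u i| := by
    funext i
    have hmv : A.mulVec u i - A.mulVec v i = c i := by
      have : A.mulVec (u - v) = A.mulVec u - A.mulVec v := A.mulVec_sub u v
      rw [huv] at this
      have := congrFun this i
      rw [hc]
      simpa [Pi.sub_apply] using this.symm
    have := habs i
    simp only [Pi.sub_apply]
    linarith
  have h4 := huniq u hequ
  have h5 := huniq v heqv
  apply hx
  rw [← huv, h4, h5, sub_self]
end

section
/- Let A be a real n×n matrix. If 0 is an eigenvalue of A or 1 is an eigenvalue of A, then there exists b ∈ ℝ^n for which the absolute value equation A x − |x| = b fails to have exactly one solution. -/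
/-- If `0` or `1` is an eigenvalue of `A` (i.e. there is a nonzero
`v` with `A v = 0` or `A v = v`), then there is a `b` for which the AVE
`A x − |x| = b` fails to have exactly one solution. -/
theorem ave_not_unique_of_eigenvalue_zero_or_one {n : ℕ}
    (A : Matrix (Fin n) (Fin n) ℝ)
    (h : (∃ v : Fin n → ℝ, v ≠ 0 ∧ A.mulVec v = 0) ∨
         (∃ v : Fin n → ℝ, v ≠ 0 ∧ A.mulVec v = v)) :
    ∃ b : Fin n → ℝ,
      ¬ ∃! x : Fin n → ℝ, A.mulVec x - (fun i => |x i|) = b := by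
  rcases h with ⟨v, hv, hAv⟩ | ⟨v, hv, hAv⟩
  · refine ⟨fun i => -|v i|, ?_⟩
    rintro ⟨x, -, hx⟩
    have h1 : A.mulVec v - (fun i => |v i|) = fun i => -|v i| := by
      rw [hAv]; funext i; simp
    have h2 : A.mulVec (-v) - (fun i => |(-v) i|) = fun i => -|v i| := by
      rw [Matrix.mulVec_neg, hAv]; funext i; simp
    have := (hx v h1).trans (hx (-v) h2).symm
    apply hv
    have : (2 : ℝ) • v = 0 := by
      funext i
      have := congrFun this i
      simp only [Pi.neg_apply] at this
      simp [Pi.smul_apply]; linarith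
    simpa using (smul_eq_zero.mp this).resolve_left (by norm_num)
  · set p : Fin n → ℝ := fun i => max (v i) 0 with hp
    set q : Fin n → ℝ := fun i => max (-(v i)) 0 with hq
    have hpq : p - q = v := by
      funext i; simp [hp, hq, max_def]; split_ifs with h1 h2 h2 <;> linarith
    refine ⟨A.mulVec p - (fun i => |p i|), ?_⟩
    rintro ⟨x, -, hx⟩
    have habs_p : (fun i => |p i|) = p := by
      funext i; exact abs_of_nonneg (le_max_right _ _)
    have habs_q : (fun i => |q i|) = q := by
      funext i; exact abs_of_nonneg (le_max_right _ _)
    have h2 : A.mulVec q - (fun i => |q i|) = A.mulVec p - (fun i => |p i|) := by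
      rw [habs_p, habs_q]
      have : A.mulVec p - A.mulVec q = p - q := by
        rw [← Matrix.mulVec_sub, hpq, hAv]
      funext i
      have := congrFun this i
      simp only [Pi.sub_apply] at this ⊢
      linarith
    have := (hx p rfl).trans (hx q h2).symm
    apply hv
    rw [← hpq, this, sub_self]
end

section
/- Let A be the real 2×2 matrix with all entries equal to 1, and let b = (−5, −4). Then the three distinct vectors (−2, −1), (−4, 3), and (6, −5) all satisfy A x − |x| = b; in particular the absolute value equation A x − |x| = b does not have a unique solution, even though the Euclidean operator norms of (A + I)⁻¹ and (A − I)⁻¹ both equal 1, which is strictly less than 2. -/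

lemma euclNorm_two (x : Fin 2 → ℝ) : euclNorm x = Real.sqrt (x 0 ^ 2 + x 1 ^ 2) := by
  simp [euclNorm, Fin.sum_univ_two]

lemma mv0 (x : Fin 2 → ℝ) :
    (!![2/3, -1/3; -1/3, 2/3] : Matrix (Fin 2) (Fin 2) ℝ).mulVec x 0 = 2/3 * x 0 - 1/3 * x 1 := by
  simp [Matrix.mulVec, dotProduct, Fin.sum_univ_two]; ring

lemma mv1 (x : Fin 2 → ℝ) :
    (!![2/3, -1/3; -1/3, 2/3] : Matrix (Fin 2) (Fin 2) ℝ).mulVec x 1 = -(1/3) * x 0 + 2/3 * x 1 := by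
  simp [Matrix.mulVec, dotProduct, Fin.sum_univ_two]; ring

lemma nv0 (x : Fin 2 → ℝ) :
    (!![0, 1; 1, 0] : Matrix (Fin 2) (Fin 2) ℝ).mulVec x 0 = x 1 := by
  simp [Matrix.mulVec, dotProduct, Fin.sum_univ_two]

lemma nv1 (x : Fin 2 → ℝ) :
    (!![0, 1; 1, 0] : Matrix (Fin 2) (Fin 2) ℝ).mulVec x 1 = x 0 := by
  simp [Matrix.mulVec, dotProduct, Fin.sum_univ_two]

lemma sig2 : sigmaMax (!![0, 1; 1, 0] : Matrix (Fin 2) (Fin 2) ℝ) = 1 := by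
  set S := {r : ℝ | ∃ x : Fin 2 → ℝ, euclNorm x = 1 ∧
      r = euclNorm ((!![0, 1; 1, 0] : Matrix (Fin 2) (Fin 2) ℝ).mulVec x)} with hS
  have hmem : (1 : ℝ) ∈ S := by
    refine ⟨![1, 0], ?_, ?_⟩
    · rw [euclNorm_two]; norm_num
    · rw [euclNorm_two, nv0, nv1]; norm_num
  have hub : ∀ r ∈ S, r ≤ 1 := by
    rintro r ⟨x, hx, rfl⟩
    rw [euclNorm_two, nv0, nv1]
    rw [euclNorm_two] at hx
    rw [show x 1 ^ 2 + x 0 ^ 2 = x 0 ^ 2 + x 1 ^ 2 by ring]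
    exact le_of_eq hx
  exact le_antisymm (Real.sSup_le hub one_pos.le) (le_csSup ⟨1, hub⟩ hmem)

lemma sig1 : sigmaMax (!![2/3, -1/3; -1/3, 2/3] : Matrix (Fin 2) (Fin 2) ℝ) = 1 := by
  set S := {r : ℝ | ∃ x : Fin 2 → ℝ, euclNorm x = 1 ∧
      r = euclNorm ((!![2/3, -1/3; -1/3, 2/3] : Matrix (Fin 2) (Fin 2) ℝ).mulVec x)} with hS
  have h2 : Real.sqrt 2 ^ 2 = 2 := Real.sq_sqrt (by norm_num)
  have hmem : (1 : ℝ) ∈ S := by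
    refine ⟨![Real.sqrt 2 / 2, -(Real.sqrt 2 / 2)], ?_, ?_⟩
    · rw [euclNorm_two]
      rw [show ((![Real.sqrt 2 / 2, -(Real.sqrt 2 / 2)] : Fin 2 → ℝ) 0) ^ 2 +
          ((![Real.sqrt 2 / 2, -(Real.sqrt 2 / 2)] : Fin 2 → ℝ) 1) ^ 2 = 1 by
        simp only [Matrix.cons_val_zero, Matrix.cons_val_one, Matrix.head_cons]
        nlinarith [h2]]
      exact Real.sqrt_one
    · rw [euclNorm_two, mv0, mv1]
      rw [show 2/3 * ((![Real.sqrt 2 / 2, -(Real.sqrt 2 / 2)] : Fin 2 → ℝ) 0) -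
          1/3 * ((![Real.sqrt 2 / 2, -(Real.sqrt 2 / 2)] : Fin 2 → ℝ) 1) = Real.sqrt 2 / 2 by
        simp only [Matrix.cons_val_zero, Matrix.cons_val_one, Matrix.head_cons]; ring,
        show -(1/3) * ((![Real.sqrt 2 / 2, -(Real.sqrt 2 / 2)] : Fin 2 → ℝ) 0) +
          2/3 * ((![Real.sqrt 2 / 2, -(Real.sqrt 2 / 2)] : Fin 2 → ℝ) 1) = -(Real.sqrt 2 / 2) by
        simp only [Matrix.cons_val_zero, Matrix.cons_val_one, Matrix.head_cons]; ring]
      rw [show (Real.sqrt 2 / 2) ^ 2 + (-(Real.sqrt 2 / 2)) ^ 2 = 1 by nlinarith [h2]]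
      exact Real.sqrt_one.symm
  have hub : ∀ r ∈ S, r ≤ 1 := by
    rintro r ⟨x, hx, rfl⟩
    have hx2 : x 0 ^ 2 + x 1 ^ 2 = 1 := by
      rw [euclNorm_two] at hx
      have := congrArg (· ^ 2) hx
      simpa [Real.sq_sqrt (by positivity : (0:ℝ) ≤ x 0 ^ 2 + x 1 ^ 2)] using this
    rw [euclNorm_two, mv0, mv1, Real.sqrt_le_one]
    nlinarith [sq_nonneg (x 0 + x 1), hx2]
  exact le_antisymm (Real.sSup_le hub one_pos.le) (le_csSup ⟨1, hub⟩ hmem)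

/-- For `A = !![1, 1; 1, 1]` and `b = (−5, −4)`, the three
distinct vectors `(−2, −1)`, `(−4, 3)`, `(6, −5)` all solve `A x − |x| = b`, so
the AVE does not have a unique solution, even though the Euclidean operator
norms of `(A + I)⁻¹` and `(A − I)⁻¹` both equal `1 < 2`. -/
theorem ave_counterexample_ones_matrix :
    let A : Matrix (Fin 2) (Fin 2) ℝ := !![1, 1; 1, 1]
    let b : Fin 2 → ℝ := ![-5, -4]
    (A.mulVec ![-2, -1] - (fun i => |(![-2, -1] : Fin 2 → ℝ) i|) = b) ∧
    (A.mulVec ![-4, 3] - (fun i => |(![-4, 3] : Fin 2 → ℝ) i|) = b) ∧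
    (A.mulVec ![6, -5] - (fun i => |(![6, -5] : Fin 2 → ℝ) i|) = b) ∧
    (![-2, -1] : Fin 2 → ℝ) ≠ ![-4, 3] ∧
    (![-2, -1] : Fin 2 → ℝ) ≠ ![6, -5] ∧
    (![-4, 3] : Fin 2 → ℝ) ≠ ![6, -5] ∧
    ¬ (∃! x : Fin 2 → ℝ, A.mulVec x - (fun i => |x i|) = b) ∧
    sigmaMax (A + 1)⁻¹ = 1 ∧
    sigmaMax (A - 1)⁻¹ = 1 ∧
    (1 : ℝ) < 2 := by
  
  intro A b
  have hinv1 : (A + 1)⁻¹ = (!![2/3, -1/3; -1/3, 2/3] : Matrix (Fin 2) (Fin 2) ℝ) := by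
    have h : (A + 1 : Matrix (Fin 2) (Fin 2) ℝ) = !![2, 1; 1, 2] := by
      show (!![1, 1; 1, 1] + 1 : Matrix (Fin 2) (Fin 2) ℝ) = _
      norm_num [← Matrix.ext_iff, Fin.forall_fin_two, Matrix.one_fin_two]
    rw [h]
    apply Matrix.inv_eq_right_inv
    norm_num [← Matrix.ext_iff, Fin.forall_fin_two, Matrix.mul_apply, Fin.sum_univ_two]
  have hinv2 : (A - 1)⁻¹ = (!![0, 1; 1, 0] : Matrix (Fin 2) (Fin 2) ℝ) := by
    have h : (A - 1 : Matrix (Fin 2) (Fin 2) ℝ) = !![0, 1; 1, 0] := by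
      show (!![1, 1; 1, 1] - 1 : Matrix (Fin 2) (Fin 2) ℝ) = _
      norm_num [← Matrix.ext_iff, Fin.forall_fin_two, Matrix.one_fin_two]
    rw [h]
    apply Matrix.inv_eq_right_inv
    norm_num [← Matrix.ext_iff, Fin.forall_fin_two, Matrix.mul_apply, Fin.sum_univ_two]
  have s1 : A.mulVec ![-2, -1] - (fun i => |(![-2, -1] : Fin 2 → ℝ) i|) = b := by
    funext i
    fin_cases i <;>
      norm_num [A, b, Matrix.mulVec, dotProduct, Fin.sum_univ_two, abs_of_nonpos]
  have s2 : A.mulVec ![-4, 3] - (fun i => |(![-4, 3] : Fin 2 → ℝ) i|) = b := by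
    funext i
    fin_cases i <;>
      norm_num [A, b, Matrix.mulVec, dotProduct, Fin.sum_univ_two, abs_of_nonpos,
        abs_of_nonneg]
  have s3 : A.mulVec ![6, -5] - (fun i => |(![6, -5] : Fin 2 → ℝ) i|) = b := by
    funext i
    fin_cases i <;>
      norm_num [A, b, Matrix.mulVec, dotProduct, Fin.sum_univ_two, abs_of_nonpos,
        abs_of_nonneg]
  have d1 : (![-2, -1] : Fin 2 → ℝ) ≠ ![-4, 3] := by
    intro h; have := congrFun h 0; norm_num at this
  refine ⟨s1, s2, s3, d1, ?_, ?_, ?_, ?_, ?_, by norm_num⟩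
  · intro h; have := congrFun h 0; norm_num at this
  · intro h; have := congrFun h 0; norm_num at this
  · rintro ⟨x, _, hu⟩
    exact d1 ((hu _ s1).trans (hu _ s2).symm)
  · rw [hinv1]; exact sig1
  · rw [hinv2]; exact sig2
end
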